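/- Convergence of discrete to continuous value functions: with V̄(x,c) = lim_{n→∞} V^n(x,c) the (uniform) limit of the discrete value functions along a nested sequence of finite rate sets with mesh size tending to zero, one has V̄(x,c) = V^{[0,c̄]}(x,c) for all (x,c) ∈ [0,∞) × [0,c̄]. -/

import Mathlib

open MeasureTheory ProbabilityTheory Filter Set
open scoped ENNReal NNReal Classical Topology

noncomputable section

namespace CarbonAbatement

/-- Negative root of (σ²/2)z² + (μ−c)z − q = 0. -/
def θ1 (μ σ q c : ℝ) : ℝ := (c - μ - Real.sqrt ((c - μ) ^ 2 + 2 * q * σ ^ 2)) / σ ^ 2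

/-- Positive root of (σ²/2)z² + (μ−c)z − q = 0. -/
def θ2 (μ σ q c : ℝ) : ℝ := (c - μ + Real.sqrt ((c - μ) ^ 2 + 2 * q * σ ^ 2)) / σ ^ 2

variable {Ω : Type*} {mΩ : MeasurableSpace Ω}

/-- `W` is a standard Brownian motion with respect to the filtration `F` under `P`. -/
structure IsStdBM (P : Measure Ω) (F : Filtration ℝ mΩ) (W : ℝ → Ω → ℝ) : Prop where
  meas : ∀ t, StronglyMeasurable (W t)
  adapted : Adapted F W
  start : ∀ ω, W 0 ω = 0
  cont : ∀ ω, Continuous fun t => W t ω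
  incr_law : ∀ s t : ℝ, 0 ≤ s → s ≤ t →
      P.map (fun ω => W t ω - W s ω) = gaussianReal 0 ((t - s).toNNReal)
  incr_indep : ∀ s t : ℝ, 0 ≤ s → s ≤ t →
      Indep (MeasurableSpace.comap (fun ω => W t ω - W s ω) inferInstance) (F s) P

/-- Admissible ratcheting-down emission strategy with rates in `S`, initial rate `c`:
right-continuous, non-increasing, `F`-adapted, values in `S` and below `c`. -/
structure Admissible (F : Filtration ℝ mΩ) (S : Set ℝ) (c : ℝ) (C : ℝ → Ω → ℝ) : Prop where
  mem_S : ∀ ω, ∀ t, 0 ≤ t → C t ω ∈ S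
  le_init : ∀ ω, ∀ t, 0 ≤ t → C t ω ≤ c
  antitone : ∀ ω, ∀ s t : ℝ, 0 ≤ s → s ≤ t → C t ω ≤ C s ω
  rightCont : ∀ ω, ∀ t : ℝ, 0 ≤ t → ContinuousWithinAt (fun s => C s ω) (Ici t) t
  adapted : Adapted F C

/-- Controlled surplus process `X_t^C = x + μ t + σ W_t − ∫_0^t C_s ds`. -/
def surplus (μ σ x : ℝ) (W C : ℝ → Ω → ℝ) (t : ℝ) (ω : Ω) : ℝ :=
  x + μ * t + σ * W t ω - ∫ s in (0:ℝ)..t, C s ω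

/-- Depletion time `τ = inf {t ≥ 0 : X t < 0}` (equal to `∞` if the path never gets negative). -/
def depletionTime (X : ℝ → ℝ) : ℝ≥0∞ :=
  sInf (ENNReal.ofReal '' {t : ℝ | 0 ≤ t ∧ X t < 0})

/-- Expected discounted payoff `J(x;C) = E[∫_0^τ e^{−qs}(C_s + Λ) ds]`. -/
def J (μ σ q Λ x : ℝ) (P : Measure Ω) (W C : ℝ → Ω → ℝ) : ℝ :=
  ∫ ω, (∫ s in {s : ℝ | 0 ≤ s ∧
        ENNReal.ofReal s < depletionTime fun t => surplus μ σ x W C t ω},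
      Real.exp (-q * s) * (C s ω + Λ)) ∂P

/-- Optimal value function `V^S(x,c) = sup_{C ∈ Π^S_{x,c}} J(x;C)`. -/
def V (μ σ q Λ : ℝ) (P : Measure Ω) (F : Filtration ℝ mΩ) (W : ℝ → Ω → ℝ)
    (S : Set ℝ) (x c : ℝ) : ℝ :=
  sSup {r : ℝ | ∃ C : ℝ → Ω → ℝ, Admissible F S c C ∧ r = J μ σ q Λ x P W C}


/-- The mesh size of a finite set `A ⊆ ℝ`: the largest gap between consecutive elements. -/
def meshSize (A : Finset ℝ) : ℝ :=
  sSup {d : ℝ | ∃ a ∈ A, ∃ b ∈ A, a < b ∧ (∀ e ∈ A, e ≤ a ∨ b ≤ e) ∧ d = b - a}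

/-- `c̃ = max{c' ∈ A : c' ≤ c}`, the largest element of `A` below `c`. -/
def ctilde (A : Finset ℝ) (c : ℝ) : ℝ :=
  sSup {a : ℝ | a ∈ A ∧ a ≤ c}


/-! ### Auxiliary lemmas -/

section Aux

/-- Riemann sums (right endpoints) of an antitone function converge to its integral. -/
private lemma riemann_tendsto {f : ℝ → ℝ} {T : ℝ} (hT : 0 ≤ T)
    (hf : AntitoneOn f (Icc 0 T)) :
    Tendsto (fun m : ℕ => ∑ k ∈ Finset.range m, f (((k : ℝ) + 1) * (T / m)) * (T / m))
      atTop (𝓝 (∫ s in (0:ℝ)..T, f s)) := by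
  have key : ∀ m : ℕ, 1 ≤ m →
      (∫ s in (0:ℝ)..T, f s) - (f 0 - f T) * (T / m) ≤
        (∑ k ∈ Finset.range m, f (((k : ℝ) + 1) * (T / m)) * (T / m)) ∧
      (∑ k ∈ Finset.range m, f (((k : ℝ) + 1) * (T / m)) * (T / m)) ≤
        ∫ s in (0:ℝ)..T, f s := by
    intro m hm
    have hm0 : (m : ℝ) ≠ 0 := Nat.cast_ne_zero.mpr (Nat.one_le_iff_ne_zero.mp hm)
    set Δ : ℝ := T / m with hΔdef
    have hΔ : 0 ≤ Δ := div_nonneg hT (Nat.cast_nonneg m)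
    set a : ℕ → ℝ := fun k => (k : ℝ) * Δ with ha
    have haT : a m = T := by simp only [ha, hΔdef]; field_simp
    have ha0 : a 0 = 0 := by simp [ha]
    have hmono : ∀ k l : ℕ, k ≤ l → a k ≤ a l := fun k l hkl =>
      mul_le_mul_of_nonneg_right (Nat.cast_le.mpr hkl) hΔ
    have hmem : ∀ k, k ≤ m → a k ∈ Icc (0:ℝ) T := fun k hk =>
      ⟨mul_nonneg (Nat.cast_nonneg k) hΔ, haT ▸ hmono k m hk⟩
    have hsubset : ∀ k, k < m → Icc (a k) (a (k+1)) ⊆ Icc (0:ℝ) T := by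
      intro k hk
      exact Icc_subset_Icc (hmem k hk.le).1 (hmem (k+1) hk).2
    have hint : ∀ k, k < m → IntervalIntegrable f MeasureTheory.volume (a k) (a (k+1)) := by
      intro k hk
      have : uIcc (a k) (a (k+1)) = Icc (a k) (a (k+1)) := uIcc_of_le (hmono k (k+1) k.le_succ)
      exact AntitoneOn.intervalIntegrable (by rw [this]; exact hf.mono (hsubset k hk))
    have hsum := intervalIntegral.sum_integral_adjacent_intervals (f := f)
        (μ := MeasureTheory.volume) (a := a) (n := m) hint
    rw [ha0, haT] at hsum
    have hdiff : ∀ k : ℕ, a (k+1) - a k = Δ := by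
      intro k; simp only [ha]; push_cast; ring
    have hlow : ∀ k, k < m → f (a (k+1)) * Δ ≤ ∫ s in (a k)..(a (k+1)), f s := by
      intro k hk
      have h1 : (∫ _ in (a k)..(a (k+1)), f (a (k+1))) ≤ ∫ s in (a k)..(a (k+1)), f s := by
        apply intervalIntegral.integral_mono_on (hmono k (k+1) k.le_succ)
          intervalIntegrable_const (hint k hk)
        intro x hx
        exact hf (hsubset k hk hx) (hmem (k+1) hk) hx.2
      rwa [intervalIntegral.integral_const, hdiff k, smul_eq_mul, mul_comm] at h1
    have hup : ∀ k, k < m → (∫ s in (a k)..(a (k+1)), f s) ≤ f (a k) * Δ := by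
      intro k hk
      have h1 : (∫ s in (a k)..(a (k+1)), f s) ≤ ∫ _ in (a k)..(a (k+1)), f (a k) := by
        apply intervalIntegral.integral_mono_on (hmono k (k+1) k.le_succ)
          (hint k hk) intervalIntegrable_const
        intro x hx
        exact hf (hmem k hk.le) (hsubset k hk hx) hx.1
      rwa [intervalIntegral.integral_const, hdiff k, smul_eq_mul, mul_comm] at h1
    have hSeq : ∀ k : ℕ, f (((k : ℝ) + 1) * Δ) * Δ = f (a (k+1)) * Δ := by
      intro k; congr 2; simp only [ha]; push_cast; ring
    constructor
    · have h2 : (∫ s in (0:ℝ)..T, f s) ≤ ∑ k ∈ Finset.range m, f (a k) * Δ := by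
        rw [← hsum]
        exact Finset.sum_le_sum fun k hk => hup k (Finset.mem_range.mp hk)
      have h3 : ∑ k ∈ Finset.range m, f (a k) * Δ
          = (∑ k ∈ Finset.range m, f (a (k+1)) * Δ) + (f (a 0) * Δ - f (a m) * Δ) := by
        have h4 : ∑ k ∈ Finset.range m, (f (a k) * Δ - f (a (k+1)) * Δ)
            = f (a 0) * Δ - f (a m) * Δ := Finset.sum_range_sub' (fun k => f (a k) * Δ) m
        rw [Finset.sum_sub_distrib] at h4
        linarith
      simp only [hSeq]
      rw [ha0, haT] at h3
      have h5 : f 0 * Δ - f T * Δ = (f 0 - f T) * Δ := by ring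
      rw [h3, h5] at h2
      linarith
    · simp only [hSeq]
      rw [← hsum]
      exact Finset.sum_le_sum fun k hk => hlow k (Finset.mem_range.mp hk)
  have hten : Tendsto (fun m : ℕ => (∫ s in (0:ℝ)..T, f s) - (f 0 - f T) * (T / m)) atTop
      (𝓝 (∫ s in (0:ℝ)..T, f s)) := by
    have h1 : Tendsto (fun m : ℕ => (T : ℝ) / m) atTop (𝓝 0) :=
      tendsto_const_div_atTop_nhds_zero_nat T
    have h2 := (h1.const_mul (f 0 - f T)).const_sub (∫ s in (0:ℝ)..T, f s)
    simpa using h2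
  refine tendsto_of_tendsto_of_tendsto_of_le_of_le' hten tendsto_const_nhds ?_ ?_
  · filter_upwards [eventually_ge_atTop 1] with m hm
    exact (key m hm).1
  · filter_upwards [eventually_ge_atTop 1] with m hm
    exact (key m hm).2

variable {Ω : Type*} {mΩ : MeasurableSpace Ω}

/-- Parametric interval integrals of processes with antitone paths are measurable. -/
private lemma measurable_param_integral {D : ℝ → Ω → ℝ}
    (hs : ∀ s : ℝ, Measurable (D s))
    (hanti : ∀ ω, AntitoneOn (fun s => D s ω) (Ici 0))
    {t : ℝ} (ht : 0 ≤ t) :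
    Measurable fun ω => ∫ s in (0:ℝ)..t, D s ω := by
  apply measurable_of_tendsto_metrizable
    (f := fun m ω => ∑ k ∈ Finset.range m, D (((k : ℝ) + 1) * (t / m)) ω * (t / m))
  · intro m
    exact Finset.measurable_sum _ fun k _ => (hs _).mul_const _
  · rw [tendsto_pi_nhds]
    intro ω
    exact riemann_tendsto ht ((hanti ω).mono (Icc_subset_Ici_self))

/-- Hitting-time measurability for processes with measurable slices and
right-continuous paths. -/
private lemma measurable_depletionTime' {Y : ℝ → Ω → ℝ}
    (hmeas : ∀ s : ℝ, 0 ≤ s → Measurable (Y s))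
    (hcont : ∀ ω, ∀ t : ℝ, 0 ≤ t → ContinuousWithinAt (fun s => Y s ω) (Ici t) t) :
    Measurable fun ω => sInf (ENNReal.ofReal '' {t : ℝ | 0 ≤ t ∧ Y t ω < 0}) := by
  apply measurable_of_Iio
  intro u
  have hset : (fun ω => sInf (ENNReal.ofReal '' {t : ℝ | 0 ≤ t ∧ Y t ω < 0})) ⁻¹' Iio u =
      ⋃ (r : ℚ) (_ : 0 ≤ (r : ℝ) ∧ ENNReal.ofReal (r : ℝ) < u), {ω | Y (r : ℝ) ω < 0} := by
    ext ω
    simp only [mem_preimage, mem_Iio, mem_iUnion, mem_setOf_eq]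
    constructor
    · intro h
      obtain ⟨v, hv, hvu⟩ := sInf_lt_iff.mp h
      obtain ⟨t, ht, rfl⟩ := hv
      have ev1 : ∀ᶠ s in 𝓝[Ici t] t, Y s ω < 0 :=
        (hcont ω t ht.1).eventually_lt_const ht.2
      have ev2 : ∀ᶠ s in 𝓝[Ici t] t, ENNReal.ofReal s < u := by
        have h1 : Tendsto (fun s : ℝ => ENNReal.ofReal s) (𝓝[Ici t] t)
            (𝓝 (ENNReal.ofReal t)) :=
          (ENNReal.continuous_ofReal.tendsto t).mono_left nhdsWithin_le_nhds
        exact h1.eventually_lt_const hvu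
      obtain ⟨u', htu', hall⟩ := (nhdsGE_basis_of_exists_gt ⟨t + 1, lt_add_one t⟩).eventually_iff.mp
        (ev1.and ev2)
      obtain ⟨r, hr1, hr2⟩ := exists_rat_btwn htu'
      have hP := hall ⟨hr1.le, hr2⟩
      exact ⟨r, ⟨ht.1.trans hr1.le, hP.2⟩, hP.1⟩
    · rintro ⟨r, ⟨hr0, hru⟩, hY⟩
      exact lt_of_le_of_lt (sInf_le ⟨(r : ℝ), ⟨hr0, hY⟩, rfl⟩) hru
  rw [hset]
  exact MeasurableSet.iUnion fun r => MeasurableSet.iUnion fun hr =>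
    measurableSet_lt (hmeas _ hr.1) measurable_const

/-- Projection to the largest grid point strictly below `y` (`0` if none). -/
private def gr (A : Finset ℝ) (y : ℝ) : ℝ := sSup {a : ℝ | a ∈ A ∧ a < y}

section gr

variable {A : Finset ℝ} {cbar y : ℝ}

private lemma gr_finite (A : Finset ℝ) (y : ℝ) : {a : ℝ | a ∈ A ∧ a < y}.Finite :=
  A.finite_toSet.subset fun a ha => ha.1

private lemma gr_bdd (A : Finset ℝ) (y : ℝ) : BddAbove {a : ℝ | a ∈ A ∧ a < y} :=
  (gr_finite A y).bddAbove

private lemma gr_nonneg (hsub : ∀ a ∈ A, a ∈ Icc (0:ℝ) cbar) : 0 ≤ gr A y :=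
  Real.sSup_nonneg fun x hx => (hsub x hx.1).1

private lemma gr_le_self (hy : 0 ≤ y) : gr A y ≤ y :=
  Real.sSup_le (fun x hx => hx.2.le) hy

private lemma gr_mem (hA0 : (0:ℝ) ∈ A) : gr A y ∈ A := by
  by_cases hne : {a : ℝ | a ∈ A ∧ a < y}.Nonempty
  · exact (hne.csSup_mem (gr_finite A y)).1
  · have h : {a : ℝ | a ∈ A ∧ a < y} = ∅ := not_nonempty_iff_eq_empty.mp hne
    rw [gr, h, Real.sSup_empty]
    exact hA0

private lemma gr_mono (hsub : ∀ a ∈ A, a ∈ Icc (0:ℝ) cbar) {y y' : ℝ} (h : y ≤ y') :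
    gr A y ≤ gr A y' :=
  Real.sSup_le (fun x hx => le_csSup (gr_bdd A y') ⟨hx.1, lt_of_lt_of_le hx.2 h⟩)
    (gr_nonneg hsub)

private lemma gr_lt (hA0 : (0:ℝ) ∈ A) (hy : 0 < y) : gr A y < y := by
  have hne : {a : ℝ | a ∈ A ∧ a < y}.Nonempty := ⟨0, hA0, hy⟩
  exact (hne.csSup_mem (gr_finite A y)).2

private lemma mesh_nonneg (A : Finset ℝ) : 0 ≤ meshSize A :=
  Real.sSup_nonneg fun d hd => by
    obtain ⟨a, _, b, _, hab, _, rfl⟩ := hd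
    linarith

private lemma mesh_bddAbove (hsub : ∀ a ∈ A, a ∈ Icc (0:ℝ) cbar) :
    BddAbove {d : ℝ | ∃ a ∈ A, ∃ b ∈ A, a < b ∧ (∀ e ∈ A, e ≤ a ∨ b ≤ e) ∧ d = b - a} := by
  refine ⟨cbar, fun d hd => ?_⟩
  obtain ⟨a, ha, b, hb, _, _, rfl⟩ := hd
  have h1 := (hsub a ha).1
  have h2 := (hsub b hb).2
  linarith

private lemma gr_ge (hA0 : (0:ℝ) ∈ A) (hAc : cbar ∈ A) (hsub : ∀ a ∈ A, a ∈ Icc (0:ℝ) cbar)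
    (hy0 : 0 ≤ y) (hyc : y ≤ cbar) : y - meshSize A ≤ gr A y := by
  rcases eq_or_lt_of_le hy0 with h | h
  · have h1 := gr_nonneg (A := A) (y := y) hsub
    have h2 := mesh_nonneg A
    linarith
  · set a := gr A y with hadef
    have ha_mem : a ∈ A := gr_mem hA0
    have ha_lt : a < y := gr_lt hA0 h
    have hBne : (A.filter (fun e => y ≤ e)).Nonempty :=
      ⟨cbar, Finset.mem_filter.mpr ⟨hAc, hyc⟩⟩
    set b := (A.filter (fun e => y ≤ e)).min' hBne with hbdef
    have hbmem := (A.filter (fun e => y ≤ e)).min'_mem hBne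
    rw [Finset.mem_filter] at hbmem
    have hbA : b ∈ A := hbmem.1
    have hby : y ≤ b := hbmem.2
    have hbmin : ∀ e ∈ A, y ≤ e → b ≤ e := fun e he hye =>
      Finset.min'_le _ _ (Finset.mem_filter.mpr ⟨he, hye⟩)
    have hgap : b - a ∈ {d : ℝ | ∃ a' ∈ A, ∃ b' ∈ A, a' < b' ∧
        (∀ e ∈ A, e ≤ a' ∨ b' ≤ e) ∧ d = b' - a'} := by
      refine ⟨a, ha_mem, b, hbA, lt_of_lt_of_le ha_lt hby, fun e he => ?_, rfl⟩
      by_cases hey : e < y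
      · exact Or.inl (le_csSup (gr_bdd A y) ⟨he, hey⟩)
      · exact Or.inr (hbmin e he (not_lt.mp hey))
    have hmesh : b - a ≤ meshSize A := le_csSup (mesh_bddAbove hsub) hgap
    linarith

private lemma ctilde_nonneg (hA0 : (0:ℝ) ∈ A) {c : ℝ} (hc : 0 ≤ c) : 0 ≤ ctilde A c :=
  le_csSup ((A.finite_toSet.subset fun a (ha : a ∈ A ∧ a ≤ c) => ha.1).bddAbove) ⟨hA0, hc⟩

private lemma ctilde_le' {c : ℝ} (hc : 0 ≤ c) : ctilde A c ≤ c :=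
  Real.sSup_le (fun x hx => hx.2) hc

private lemma gr_le_ctilde (hA0 : (0:ℝ) ∈ A) {c : ℝ} (hc : 0 ≤ c) (hyc : y ≤ c) :
    gr A y ≤ ctilde A c :=
  Real.sSup_le
    (fun x hx => le_csSup ((A.finite_toSet.subset fun a (ha : a ∈ A ∧ a ≤ c) => ha.1).bddAbove)
      ⟨hx.1, (hx.2.trans_le hyc).le⟩)
    (ctilde_nonneg hA0 hc)

end gr

section expint

variable {q : ℝ}

private lemma integral_exp_q (hq : 0 < q) :
    ∫ s in Ioi (0:ℝ), Real.exp (-q * s) = 1 / q := by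
  have h := MeasureTheory.integral_comp_mul_left_Ioi (fun x => Real.exp (-x)) 0 hq
  simp only [mul_zero] at h
  have h2 : (∫ x in Ioi (0:ℝ), Real.exp (-(q * x))) = q⁻¹ • ∫ x in Ioi (0:ℝ), Real.exp (-x) := h
  rw [integral_exp_neg_Ioi] at h2
  simp only [neg_zero, Real.exp_zero, smul_eq_mul, mul_one] at h2
  rw [show (fun s : ℝ => Real.exp (-q * s)) = fun s : ℝ => Real.exp (-(q * s)) by
    funext s; ring_nf]
  rw [h2, one_div]

private lemma integrableOn_exp_q (hq : 0 < q) {A : Set ℝ} (hsub : A ⊆ Ici 0) :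
    IntegrableOn (fun s => Real.exp (-q * s)) A := by
  have h1 : IntegrableOn (fun s => Real.exp (-q * s)) (Ici (0:ℝ)) :=
    (integrableOn_Ici_iff_integrableOn_Ioi).mpr (exp_neg_integrableOn_Ioi 0 hq)
  exact h1.mono_set hsub

private lemma setIntegral_exp_q_le (hq : 0 < q) {A : Set ℝ} (hsub : A ⊆ Ici 0) :
    ∫ s in A, Real.exp (-q * s) ≤ 1 / q := by
  have h1 : (∫ s in Ici (0:ℝ), Real.exp (-q * s)) = 1 / q := by
    rw [← integral_exp_q hq]
    exact setIntegral_congr_set (MeasureTheory.Ioi_ae_eq_Ici).symm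
  rw [← h1]
  refine setIntegral_mono_set (integrableOn_exp_q hq le_rfl) ?_ hsub.eventuallyLE
  exact ae_of_all _ fun s => Real.exp_nonneg _

end expint

private lemma measurableSet_payoffSet (τ : ℝ≥0∞) :
    MeasurableSet {s : ℝ | 0 ≤ s ∧ ENNReal.ofReal s < τ} := by
  have h : {s : ℝ | 0 ≤ s ∧ ENNReal.ofReal s < τ}
      = Ici (0:ℝ) ∩ (ENNReal.ofReal ⁻¹' Iio τ) := by
    ext s; simp [mem_Ici]
  rw [h]
  exact measurableSet_Ici.inter (ENNReal.measurable_ofReal measurableSet_Iio)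

private lemma inner_le_bound {q Λ cbar : ℝ} (hq : 0 < q) (hΛ : 0 ≤ Λ) (hcbar : 0 ≤ cbar)
    {A : Set ℝ} (hA : MeasurableSet A) (hAsub : A ⊆ Ici 0)
    {h : ℝ → ℝ} (hle : ∀ s ∈ A, h s ≤ (cbar + Λ) * Real.exp (-q * s))
    (h0 : ∀ s ∈ A, 0 ≤ h s) :
    ∫ s in A, h s ≤ (cbar + Λ) * (1 / q) := by
  by_cases hint : IntegrableOn h A
  · calc ∫ s in A, h s ≤ ∫ s in A, (cbar + Λ) * Real.exp (-q * s) :=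
        setIntegral_mono_on hint ((integrableOn_exp_q hq hAsub).const_mul _) hA hle
      _ = (cbar + Λ) * ∫ s in A, Real.exp (-q * s) := by rw [MeasureTheory.integral_const_mul]
      _ ≤ (cbar + Λ) * (1 / q) :=
        mul_le_mul_of_nonneg_left (setIntegral_exp_q_le hq hAsub) (by linarith)
  · rw [integral_undef hint]
    positivity

/-- Integrability of the discounted payoff integrand along an antitone nonnegative path. -/
private lemma integrableOn_payoff {q Λ : ℝ} (hq : 0 < q) (hΛ : 0 ≤ Λ)
    {g : ℝ → ℝ} (hanti : AntitoneOn g (Ici 0)) (hg0 : ∀ s : ℝ, 0 ≤ s → 0 ≤ g s)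
    {A : Set ℝ} (hA : MeasurableSet A) (hAsub : A ⊆ Ici 0) :
    IntegrableOn (fun s => Real.exp (-q * s) * (g s + Λ)) A := by
  have hgbar : Antitone fun s : ℝ => g (max s 0) := fun s s' h =>
    hanti (le_max_right s 0) (le_max_right s' 0) (max_le_max h le_rfl)
  have hmeas : Measurable fun s : ℝ => Real.exp (-q * s) * (g (max s 0) + Λ) :=
    ((Real.continuous_exp.comp (continuous_const.mul continuous_id)).measurable).mul
      (hgbar.measurable.add_const _)
  have haesm : AEStronglyMeasurable (fun s => Real.exp (-q * s) * (g s + Λ))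
      (volume.restrict A) := by
    refine hmeas.aestronglyMeasurable.restrict.congr ?_
    rw [Filter.eventuallyEq_iff_exists_mem]
    refine ⟨A, self_mem_ae_restrict hA, fun s hs => ?_⟩
    have h0s : (0:ℝ) ≤ s := hAsub hs
    simp [max_eq_left h0s]
  refine Integrable.mono' (g := fun s => Real.exp (-q * s) * (g 0 + Λ))
    ((integrableOn_exp_q hq hAsub).mul_const _) haesm ?_
  refine (ae_restrict_iff' hA).2 (ae_of_all _ fun s hs => ?_)
  have h0 : (0:ℝ) ≤ s := hAsub hs
  rw [Real.norm_eq_abs, abs_of_nonneg (mul_nonneg (Real.exp_nonneg _)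
    (by linarith [hg0 s h0]))]
  exact mul_le_mul_of_nonneg_left (by linarith [hanti self_mem_Ici h0 h0]) (Real.exp_nonneg _)

/-- Measurability in `ω` of the inner discounted payoff integral. -/
private lemma measurable_inner' {q Λ : ℝ} (hq : 0 < q) (hΛ : 0 ≤ Λ)
    {τ' : Ω → ℝ≥0∞} (hτ : Measurable τ')
    {D : ℝ → Ω → ℝ} (hs : ∀ s : ℝ, Measurable (D s))
    (hanti : ∀ ω, AntitoneOn (fun s => D s ω) (Ici 0))
    (h0 : ∀ ω, ∀ s : ℝ, 0 ≤ s → 0 ≤ D s ω) :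
    Measurable fun ω => ∫ s in {s : ℝ | 0 ≤ s ∧ ENNReal.ofReal s < τ' ω},
      Real.exp (-q * s) * (D s ω + Λ) := by
  set f : Ω → ℝ → ℝ := fun ω s => Real.exp (-q * s) * (D s ω + Λ) with hf
  set A' : Ω → Set ℝ := fun ω => {s : ℝ | ENNReal.ofReal s < τ' ω} with hA'
  have hA'meas : ∀ ω, MeasurableSet (A' ω) := fun ω =>
    ENNReal.measurable_ofReal measurableSet_Iio
  set F : Ω → ℝ → ℝ := fun ω s => if ENNReal.ofReal s < τ' ω then f ω s else 0 with hF
  have hFind : ∀ ω, F ω = (A' ω).indicator (f ω) := by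
    intro ω; funext s; simp [hF, hA', Set.indicator_apply]
  have hf_nonneg : ∀ ω, ∀ s : ℝ, 0 ≤ s → 0 ≤ f ω s := fun ω s hs0 =>
    mul_nonneg (Real.exp_nonneg _) (by linarith [h0 ω s hs0])
  have hf_anti : ∀ ω, AntitoneOn (f ω) (Ici 0) := by
    intro ω s hs s' hs' hss
    have h1 : Real.exp (-q * s') ≤ Real.exp (-q * s) :=
      Real.exp_le_exp.mpr (by nlinarith [hq.le])
    have h2 : D s' ω + Λ ≤ D s ω + Λ := by
      have := hanti ω hs hs' hss; linarith
    exact mul_le_mul h1 h2 (by linarith [h0 ω s' hs']) (Real.exp_nonneg _)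
  have hF_anti : ∀ ω, AntitoneOn (F ω) (Ici 0) := by
    intro ω s hs s' hs' hss
    by_cases h' : ENNReal.ofReal s' < τ' ω
    · have h'' : ENNReal.ofReal s < τ' ω :=
        lt_of_le_of_lt (ENNReal.ofReal_le_ofReal hss) h'
      simp only [hF, if_pos h', if_pos h'']
      exact hf_anti ω hs hs' hss
    · simp only [hF, if_neg h']
      by_cases h'' : ENNReal.ofReal s < τ' ω
      · simp only [if_pos h'']; exact hf_nonneg ω s hs
      · simp [if_neg h'']
  have hIM : ∀ M : ℕ, Measurable fun ω => ∫ s in (0:ℝ)..(M : ℝ), F ω s := by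
    intro M
    apply measurable_of_tendsto_metrizable
      (f := fun m ω => ∑ k ∈ Finset.range m,
        F ω (((k : ℝ) + 1) * ((M : ℝ) / m)) * ((M : ℝ) / m))
    · intro m
      refine Finset.measurable_sum _ fun k _ => Measurable.mul_const ?_ _
      have hsetm : MeasurableSet
          {ω | ENNReal.ofReal (((k : ℝ) + 1) * ((M : ℝ) / m)) < τ' ω} :=
        hτ measurableSet_Ioi
      exact Measurable.ite hsetm (((hs _).add_const _).const_mul _) measurable_const
    · rw [tendsto_pi_nhds]
      intro ω
      exact riemann_tendsto (Nat.cast_nonneg M) ((hF_anti ω).mono Icc_subset_Ici_self)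
  have hint : ∀ ω, IntegrableOn (f ω) (Ioi 0 ∩ A' ω) := by
    intro ω
    exact integrableOn_payoff hq hΛ
      ((hanti ω)) (fun s hs => h0 ω s hs)
      (measurableSet_Ioi.inter (hA'meas ω))
      (fun s hs => mem_Ici.mpr (le_of_lt hs.1))
  have hpt : ∀ ω, Tendsto (fun M : ℕ => ∫ s in (0:ℝ)..(M : ℝ), F ω s) atTop
      (𝓝 (∫ s in {s : ℝ | 0 ≤ s ∧ ENNReal.ofReal s < τ' ω}, f ω s)) := by
    intro ω
    have hIMeq : ∀ M : ℕ, (∫ s in (0:ℝ)..(M : ℝ), F ω s)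
        = ∫ s in Ioc (0:ℝ) (M : ℝ) ∩ A' ω, f ω s := by
      intro M
      rw [intervalIntegral.integral_of_le (Nat.cast_nonneg M), hFind ω,
        integral_indicator (hA'meas ω)]
      congr 1
      rw [Measure.restrict_restrict (hA'meas ω), inter_comm]
    have hunion : (⋃ M : ℕ, Ioc (0:ℝ) (M : ℝ) ∩ A' ω) = Ioi 0 ∩ A' ω := by
      ext s
      simp only [mem_iUnion, mem_inter_iff, mem_Ioc, mem_Ioi]
      constructor
      · rintro ⟨M, ⟨h1, _⟩, h2⟩; exact ⟨h1, h2⟩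
      · rintro ⟨h1, h2⟩
        obtain ⟨M, hM⟩ := exists_nat_ge s
        exact ⟨M, ⟨h1, hM⟩, h2⟩
    have hmono : Monotone fun M : ℕ => Ioc (0:ℝ) (M : ℝ) ∩ A' ω := by
      intro M N hMN
      exact inter_subset_inter (Ioc_subset_Ioc le_rfl (Nat.cast_le.mpr hMN)) le_rfl
    have htendsto := tendsto_setIntegral_of_monotone
      (fun M : ℕ => (measurableSet_Ioc.inter (hA'meas ω)))
      hmono (hunion ▸ hint ω)
    rw [hunion] at htendsto
    have hfinal : (∫ s in Ioi (0:ℝ) ∩ A' ω, f ω s)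
        = ∫ s in {s : ℝ | 0 ≤ s ∧ ENNReal.ofReal s < τ' ω}, f ω s := by
      apply setIntegral_congr_set
      have h1 : {s : ℝ | 0 ≤ s ∧ ENNReal.ofReal s < τ' ω} = Ici (0:ℝ) ∩ A' ω := by
        ext s; simp [hA', mem_Ici, and_comm]
      rw [h1]
      exact (MeasureTheory.Ioi_ae_eq_Ici (a := (0:ℝ))).inter (Filter.EventuallyEq.refl _ _)
    rw [← hfinal]
    simp only [hIMeq]
    exact htendsto
  exact measurable_of_tendsto_metrizable hIM (tendsto_pi_nhds.mpr hpt)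

/-- Right-continuity of the primitive of an antitone, `[0,cbar]`-valued path. -/
private lemma primitive_tendsto_within {D : ℝ → ℝ} {cbar : ℝ}
    (hanti : AntitoneOn D (Ici 0)) (hD : ∀ s : ℝ, 0 ≤ s → D s ∈ Icc (0:ℝ) cbar)
    {t : ℝ} (ht : 0 ≤ t) :
    Tendsto (fun r => ∫ s in (0:ℝ)..r, D s) (𝓝[Ici t] t)
      (𝓝 (∫ s in (0:ℝ)..t, D s)) := by
  have hii : ∀ a b : ℝ, 0 ≤ a → a ≤ b → IntervalIntegrable D MeasureTheory.volume a b := by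
    intro a b ha hab
    apply AntitoneOn.intervalIntegrable
    rw [uIcc_of_le hab]
    exact hanti.mono fun s hs => ha.trans hs.1
  have key : (fun r => ∫ s in (0:ℝ)..r, D s) =ᶠ[𝓝[Ici t] t]
      (fun r => (∫ s in (0:ℝ)..t, D s) + ∫ s in t..r, D s) := by
    filter_upwards [self_mem_nhdsWithin] with r hr
    exact (intervalIntegral.integral_add_adjacent_intervals (hii 0 t le_rfl ht)
      (hii t r ht hr)).symm
  have h2 : Tendsto (fun r => ∫ s in t..r, D s) (𝓝[Ici t] t) (𝓝 0) := by
    have hupper : ∀ᶠ r in 𝓝[Ici t] t, (∫ s in t..r, D s) ≤ cbar * (r - t) := by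
      filter_upwards [self_mem_nhdsWithin] with r hr
      have h3 : (∫ s in t..r, D s) ≤ ∫ _ in t..r, cbar := by
        apply intervalIntegral.integral_mono_on hr (hii t r ht hr) intervalIntegrable_const
        intro s hs
        exact (hD s (ht.trans hs.1)).2
      rwa [intervalIntegral.integral_const, smul_eq_mul, mul_comm] at h3
    have hlower : ∀ᶠ r in 𝓝[Ici t] t, 0 ≤ ∫ s in t..r, D s := by
      filter_upwards [self_mem_nhdsWithin] with r hr
      exact intervalIntegral.integral_nonneg hr fun s hs => (hD s (ht.trans hs.1)).1
    have hten : Tendsto (fun r : ℝ => cbar * (r - t)) (𝓝[Ici t] t) (𝓝 0) := by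
      have h4 : Tendsto (fun r : ℝ => cbar * (r - t)) (𝓝 t) (𝓝 (cbar * (t - t))) :=
        (continuous_const.mul (continuous_id.sub continuous_const)).tendsto t
      simp only [sub_self, mul_zero] at h4
      exact h4.mono_left nhdsWithin_le_nhds
    exact tendsto_of_tendsto_of_tendsto_of_le_of_le' tendsto_const_nhds hten hlower hupper
  have h5 := (tendsto_const_nhds (α := ℝ)
    (x := ∫ s in (0:ℝ)..t, D s) (f := 𝓝[Ici t] t)).add h2
  rw [add_zero] at h5
  exact Filter.Tendsto.congr' key.symm h5

end Aux

/-- Convergence of the discrete to the continuous value function: the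
pointwise limit `V̄` of the discrete value functions `Vⁿ(x,c) = V^{Sⁿ}(x,c̃ⁿ)` along a
nested sequence of finite rate sets with mesh size tending to zero equals the optimal value
function `V^{[0,c̄]}` on `[0,∞) × [0,c̄]`. -/
theorem discrete_to_continuous_convergence
    (μ σ q Λ cbar : ℝ) (hσ : 0 < σ) (hq : 0 < q) (hΛ : 0 < Λ) (hcbar : 0 < cbar)
    (P : Measure Ω) [IsProbabilityMeasure P] (F : Filtration ℝ mΩ) (W : ℝ → Ω → ℝ)
    (hBM : IsStdBM P F W) (hF : F = Filtration.natural W hBM.meas)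
    (Sn : ℕ → Finset ℝ)
    (h0 : (Sn 0 : Set ℝ) = {0, cbar})
    (hnested : ∀ n : ℕ, Sn n ⊆ Sn (n + 1))
    (hmem : ∀ n : ℕ, (0:ℝ) ∈ Sn n ∧ cbar ∈ Sn n)
    (hrange : ∀ n : ℕ, ∀ a ∈ Sn n, a ∈ Icc (0:ℝ) cbar)
    (hmesh : Tendsto (fun n => meshSize (Sn n)) atTop (𝓝 0))
    (Vbar : ℝ → ℝ → ℝ)
    (hVbar : ∀ x c : ℝ, 0 ≤ x → c ∈ Icc (0:ℝ) cbar →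
      Tendsto (fun n => V μ σ q Λ P F W (Sn n : Set ℝ) x (ctilde (Sn n) c)) atTop
        (𝓝 (Vbar x c))) :
    ∀ x c : ℝ, 0 ≤ x → c ∈ Icc (0:ℝ) cbar →
      Vbar x c = V μ σ q Λ P F W (Icc 0 cbar) x c := by
  intro x c hx hc
  have hqΛ : (0:ℝ) ≤ Λ := hΛ.le
  set B : ℝ := (cbar + Λ) * (1 / q) with hBdef
  -- inner payoff bounds
  have hinner_nonneg : ∀ (C : ℝ → Ω → ℝ) (ω : Ω), (∀ t : ℝ, 0 ≤ t → 0 ≤ C t ω) →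
      0 ≤ ∫ s in {s : ℝ | 0 ≤ s ∧
          ENNReal.ofReal s < depletionTime fun t => surplus μ σ x W C t ω},
        Real.exp (-q * s) * (C s ω + Λ) := by
    intro C ω h0
    refine setIntegral_nonneg (measurableSet_payoffSet _) fun s hs => ?_
    exact mul_nonneg (Real.exp_nonneg _) (by linarith [h0 s hs.1])
  have hinner_le : ∀ (C : ℝ → Ω → ℝ) (ω : Ω), (∀ t : ℝ, 0 ≤ t → C t ω ∈ Icc (0:ℝ) cbar) →
      (∫ s in {s : ℝ | 0 ≤ s ∧
          ENNReal.ofReal s < depletionTime fun t => surplus μ σ x W C t ω},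
        Real.exp (-q * s) * (C s ω + Λ)) ≤ B := by
    intro C ω hrg
    refine inner_le_bound hq hqΛ hcbar.le (measurableSet_payoffSet _)
      (fun s hs => hs.1) (fun s hs => ?_) (fun s hs => ?_)
    · calc Real.exp (-q * s) * (C s ω + Λ) ≤ Real.exp (-q * s) * (cbar + Λ) :=
          mul_le_mul_of_nonneg_left (by linarith [(hrg s hs.1).2]) (Real.exp_nonneg _)
        _ = (cbar + Λ) * Real.exp (-q * s) := mul_comm _ _
    · exact mul_nonneg (Real.exp_nonneg _) (by linarith [(hrg s hs.1).1])
  have hJ_nonneg : ∀ C : ℝ → Ω → ℝ, (∀ ω, ∀ t : ℝ, 0 ≤ t → 0 ≤ C t ω) →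
      0 ≤ J μ σ q Λ x P W C := fun C h0 =>
    integral_nonneg fun ω => hinner_nonneg C ω (h0 ω)
  have hJ_le : ∀ C : ℝ → Ω → ℝ, (∀ ω, ∀ t : ℝ, 0 ≤ t → C t ω ∈ Icc (0:ℝ) cbar) →
      J μ σ q Λ x P W C ≤ B := by
    intro C hrg
    have h1 := integral_mono_of_nonneg (μ := P)
      (ae_of_all _ fun ω => hinner_nonneg C ω fun t ht => (hrg ω t ht).1)
      (integrable_const B)
      (ae_of_all _ fun ω => hinner_le C ω (hrg ω))
    calc J μ σ q Λ x P W C ≤ ∫ _, B ∂P := h1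
      _ = B := by rw [integral_const, probReal_univ, one_smul]
  -- value set facts
  have hbdd : ∀ S : Set ℝ, S ⊆ Icc 0 cbar → ∀ c' : ℝ,
      BddAbove {r : ℝ | ∃ C : ℝ → Ω → ℝ, Admissible F S c' C ∧ r = J μ σ q Λ x P W C} := by
    intro S hS c'
    refine ⟨B, fun r hr => ?_⟩
    obtain ⟨C, hC, rfl⟩ := hr
    exact hJ_le C fun ω t ht => hS (hC.mem_S ω t ht)
  have hne : ∀ S : Set ℝ, (0:ℝ) ∈ S → ∀ c' : ℝ, 0 ≤ c' →
      {r : ℝ | ∃ C : ℝ → Ω → ℝ, Admissible F S c' C ∧ r = J μ σ q Λ x P W C}.Nonempty := by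
    intro S h0S c' hc'
    exact ⟨J μ σ q Λ x P W fun _ _ => 0, ⟨fun _ _ => 0,
      ⟨fun ω t _ => h0S, fun ω t _ => hc', fun ω s t _ _ => le_rfl,
        fun ω t _ => continuousWithinAt_const, fun t => measurable_const⟩, rfl⟩⟩
  have hSn_sub : ∀ n, ((Sn n : Finset ℝ) : Set ℝ) ⊆ Icc 0 cbar := fun n a ha => hrange n a ha
  have hctilde_le : ∀ n, ctilde (Sn n) c ≤ c := fun n => ctilde_le' hc.1
  -- easy direction : Vⁿ ≤ V^{Icc}
  have heasy : ∀ n, V μ σ q Λ P F W (Sn n : Set ℝ) x (ctilde (Sn n) c) ≤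
      V μ σ q Λ P F W (Icc 0 cbar) x c := by
    intro n
    refine csSup_le_csSup (hbdd _ subset_rfl c)
      (hne _ (Finset.mem_coe.mpr (hmem n).1) _ (ctilde_nonneg (hmem n).1 hc.1)) ?_
    rintro r ⟨C, hC, rfl⟩
    exact ⟨C, ⟨fun ω t ht => hSn_sub n (hC.mem_S ω t ht),
      fun ω t ht => (hC.le_init ω t ht).trans (hctilde_le n),
      hC.antitone, hC.rightCont, hC.adapted⟩, rfl⟩
  have hVbar_le : Vbar x c ≤ V μ σ q Λ P F W (Icc 0 cbar) x c :=
    le_of_tendsto (hVbar x c hx hc) (Filter.Eventually.of_forall heasy)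
  -- hard direction
  have hkey : ∀ n : ℕ, ∀ C : ℝ → Ω → ℝ, Admissible F (Icc 0 cbar) c C →
      J μ σ q Λ x P W C ≤ V μ σ q Λ P F W (Sn n : Set ℝ) x (ctilde (Sn n) c) +
        meshSize (Sn n) * (1 / q) := by
    intro n C hC
    have hA0 : (0:ℝ) ∈ Sn n := (hmem n).1
    have hAc : cbar ∈ Sn n := (hmem n).2
    have hsubA : ∀ a ∈ Sn n, a ∈ Icc (0:ℝ) cbar := hrange n
    set mh : ℝ := meshSize (Sn n) with hmhdef
    set Cn : ℝ → Ω → ℝ := fun t ω => gr (Sn n) (C t ω) with hCndef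
    have hCrange : ∀ ω, ∀ t : ℝ, 0 ≤ t → C t ω ∈ Icc (0:ℝ) cbar :=
      fun ω t ht => hC.mem_S ω t ht
    have hCn_mono : Monotone (gr (Sn n)) := fun y y' h => gr_mono hsubA h
    -- admissibility of the projected strategy
    have hCnAdm : Admissible F (Sn n : Set ℝ) (ctilde (Sn n) c) Cn := by
      refine ⟨fun ω t ht => Finset.mem_coe.mpr (gr_mem hA0),
        fun ω t ht => gr_le_ctilde hA0 hc.1 (hC.le_init ω t ht),
        fun ω s t hs hst => hCn_mono (hC.antitone ω s t hs hst), ?_, fun t =>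
          (hCn_mono.measurable.comp (hC.adapted t))⟩
      intro ω t ht
      rcases eq_or_lt_of_le (hCrange ω t ht).1 with h0 | h0
      · have ev2 : (fun s => Cn s ω) =ᶠ[𝓝[Ici t] t] fun _ => Cn t ω := by
          filter_upwards [self_mem_nhdsWithin] with s hs
          have h1 : C s ω ≤ C t ω := hC.antitone ω t s ht hs
          have h2 : 0 ≤ C s ω := (hCrange ω s (ht.trans hs)).1
          have h3 : C s ω = C t ω := le_antisymm h1 (h0 ▸ h2)
          simp only [hCndef, h3]
        exact Filter.Tendsto.congr' ev2.symm tendsto_const_nhds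
      · have ha_lt : gr (Sn n) (C t ω) < C t ω := gr_lt hA0 h0
        have haA : gr (Sn n) (C t ω) ∈ Sn n := gr_mem hA0
        have ev : ∀ᶠ s in 𝓝[Ici t] t, gr (Sn n) (C t ω) < C s ω :=
          (hC.rightCont ω t ht).eventually_const_lt ha_lt
        have ev2 : (fun s => Cn s ω) =ᶠ[𝓝[Ici t] t] fun _ => Cn t ω := by
          filter_upwards [ev, self_mem_nhdsWithin] with s h1 h2
          have h3 : C s ω ≤ C t ω := hC.antitone ω t s ht h2
          exact le_antisymm (hCn_mono h3) (le_csSup (gr_bdd (Sn n) (C s ω)) ⟨haA, h1⟩)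
        exact Filter.Tendsto.congr' ev2.symm tendsto_const_nhds
    -- path properties
    have hC_anti : ∀ ω, AntitoneOn (fun s => C s ω) (Ici 0) :=
      fun ω s hs s' _ hss => hC.antitone ω s s' hs hss
    have hCn_anti : ∀ ω, AntitoneOn (fun s => Cn s ω) (Ici 0) :=
      fun ω s hs s' _ hss => hCn_mono (hC.antitone ω s s' hs hss)
    have hCn_range : ∀ ω, ∀ t : ℝ, 0 ≤ t → Cn t ω ∈ Icc (0:ℝ) cbar :=
      fun ω t ht => hsubA _ (gr_mem hA0)
    have hii : ∀ (D : ℝ → Ω → ℝ), (∀ ω, AntitoneOn (fun s => D s ω) (Ici 0)) → ∀ ω,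
        ∀ a b : ℝ, 0 ≤ a → a ≤ b →
        IntervalIntegrable (fun s => D s ω) MeasureTheory.volume a b := by
      intro D hanti ω a b ha hab
      apply AntitoneOn.intervalIntegrable
      rw [uIcc_of_le hab]
      exact (hanti ω).mono fun s hs => ha.trans hs.1
    -- surplus and depletion-time comparison
    have hsur : ∀ ω, ∀ t : ℝ, 0 ≤ t →
        surplus μ σ x W C t ω ≤ surplus μ σ x W Cn t ω := by
      intro ω t ht
      unfold surplus
      have h1 : (∫ s in (0:ℝ)..t, Cn s ω) ≤ ∫ s in (0:ℝ)..t, C s ω := by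
        apply intervalIntegral.integral_mono_on ht (hii Cn hCn_anti ω 0 t le_rfl ht)
          (hii C hC_anti ω 0 t le_rfl ht)
        intro s hs
        exact gr_le_self (hCrange ω s hs.1).1
      linarith
    have hτ : ∀ ω, depletionTime (fun t => surplus μ σ x W C t ω) ≤
        depletionTime fun t => surplus μ σ x W Cn t ω := by
      intro ω
      unfold depletionTime
      apply sInf_le_sInf
      apply image_mono
      rintro t ⟨ht0, hneg⟩
      exact ⟨ht0, lt_of_le_of_lt (hsur ω t ht0) hneg⟩
    -- measurability of the projected strategy's slices and depletion time
    have hCn_meas : ∀ s : ℝ, Measurable (Cn s) := fun s =>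
      (hCn_mono.measurable.comp (hC.adapted s)).mono (F.le s) le_rfl
    have hτn_meas : Measurable fun ω => depletionTime fun t => surplus μ σ x W Cn t ω := by
      unfold depletionTime
      apply measurable_depletionTime' (Y := fun t ω => surplus μ σ x W Cn t ω)
      · intro s hs
        unfold surplus
        exact (((hBM.meas s).measurable.const_mul σ).const_add (x + μ * s)).sub
          (measurable_param_integral hCn_meas hCn_anti hs)
      · intro ω t ht
        have hbase : Tendsto (fun s : ℝ => x + μ * s + σ * W s ω) (𝓝[Ici t] t)
            (𝓝 (x + μ * t + σ * W t ω)) :=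
          (((continuous_const.add (continuous_const.mul continuous_id)).add
            (continuous_const.mul (hBM.cont ω))).tendsto t).mono_left nhdsWithin_le_nhds
        have hprim := primitive_tendsto_within (hCn_anti ω)
          (fun s hs => hCn_range ω s hs) ht
        unfold surplus
        exact hbase.sub hprim
    -- pointwise payoff chain
    have hchain : ∀ ω,
        (∫ s in {s : ℝ | 0 ≤ s ∧
            ENNReal.ofReal s < depletionTime fun t => surplus μ σ x W C t ω},
          Real.exp (-q * s) * (C s ω + Λ)) ≤
        (∫ s in {s : ℝ | 0 ≤ s ∧
            ENNReal.ofReal s < depletionTime fun t => surplus μ σ x W Cn t ω},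
          Real.exp (-q * s) * (Cn s ω + Λ)) + mh * (1 / q) := by
      intro ω
      set AC : Set ℝ := {s : ℝ | 0 ≤ s ∧
        ENNReal.ofReal s < depletionTime fun t => surplus μ σ x W C t ω} with hACdef
      set An : Set ℝ := {s : ℝ | 0 ≤ s ∧
        ENNReal.ofReal s < depletionTime fun t => surplus μ σ x W Cn t ω} with hAndef
      have hACm : MeasurableSet AC := measurableSet_payoffSet _
      have hAnm : MeasurableSet An := measurableSet_payoffSet _
      have hACsub : AC ⊆ Ici 0 := fun s hs => hs.1
      have hAnsub : An ⊆ Ici 0 := fun s hs => hs.1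
      have hACAn : AC ⊆ An := fun s hs => ⟨hs.1, lt_of_lt_of_le hs.2 (hτ ω)⟩
      have hfC_int : IntegrableOn (fun s => Real.exp (-q * s) * (C s ω + Λ)) AC :=
        integrableOn_payoff hq hqΛ (hC_anti ω) (fun s hs => (hCrange ω s hs).1) hACm hACsub
      have hfn_int_AC : IntegrableOn (fun s => Real.exp (-q * s) * (Cn s ω + Λ)) AC :=
        integrableOn_payoff hq hqΛ (hCn_anti ω) (fun s hs => (hCn_range ω s hs).1) hACm hACsub
      have hfn_int_An : IntegrableOn (fun s => Real.exp (-q * s) * (Cn s ω + Λ)) An :=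
        integrableOn_payoff hq hqΛ (hCn_anti ω) (fun s hs => (hCn_range ω s hs).1) hAnm hAnsub
      have hexp_int : IntegrableOn (fun s => Real.exp (-q * s)) AC :=
        integrableOn_exp_q hq hACsub
      calc (∫ s in AC, Real.exp (-q * s) * (C s ω + Λ))
          ≤ ∫ s in AC, (Real.exp (-q * s) * (Cn s ω + Λ) + mh * Real.exp (-q * s)) := by
            refine setIntegral_mono_on hfC_int (hfn_int_AC.add (hexp_int.const_mul mh)) hACm
              fun s hs => ?_
            have h1 : C s ω - mh ≤ Cn s ω :=
              gr_ge hA0 hAc hsubA (hCrange ω s hs.1).1 (hCrange ω s hs.1).2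
            have h2 : Real.exp (-q * s) * (C s ω + Λ) ≤
                Real.exp (-q * s) * (Cn s ω + Λ + mh) :=
              mul_le_mul_of_nonneg_left (by linarith) (Real.exp_nonneg _)
            calc Real.exp (-q * s) * (C s ω + Λ) ≤
                Real.exp (-q * s) * (Cn s ω + Λ + mh) := h2
              _ = Real.exp (-q * s) * (Cn s ω + Λ) + mh * Real.exp (-q * s) := by ring
        _ = (∫ s in AC, Real.exp (-q * s) * (Cn s ω + Λ)) +
            mh * ∫ s in AC, Real.exp (-q * s) := by
            rw [integral_add hfn_int_AC (hexp_int.const_mul mh),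
              MeasureTheory.integral_const_mul]
        _ ≤ (∫ s in An, Real.exp (-q * s) * (Cn s ω + Λ)) + mh * (1 / q) := by
            refine add_le_add ?_ ?_
            · refine setIntegral_mono_set hfn_int_An ?_ hACAn.eventuallyLE
              refine (ae_restrict_iff' hAnm).2 (ae_of_all _ fun s hs => ?_)
              exact mul_nonneg (Real.exp_nonneg _)
                (by linarith [(hCn_range ω s hs.1).1])
            · exact mul_le_mul_of_nonneg_left (setIntegral_exp_q_le hq hACsub)
                (mesh_nonneg (Sn n))
    -- integrability of the projected inner payoff
    have hinnern_meas : Measurable fun ω =>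
        ∫ s in {s : ℝ | 0 ≤ s ∧
            ENNReal.ofReal s < depletionTime fun t => surplus μ σ x W Cn t ω},
          Real.exp (-q * s) * (Cn s ω + Λ) :=
      measurable_inner' hq hqΛ hτn_meas hCn_meas hCn_anti
        fun ω s hs => (hCn_range ω s hs).1
    have hinnern_int : Integrable (fun ω =>
        ∫ s in {s : ℝ | 0 ≤ s ∧
            ENNReal.ofReal s < depletionTime fun t => surplus μ σ x W Cn t ω},
          Real.exp (-q * s) * (Cn s ω + Λ)) P := by
      refine Integrable.mono' (integrable_const B) hinnern_meas.aestronglyMeasurable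
        (ae_of_all _ fun ω => ?_)
      rw [Real.norm_eq_abs, abs_of_nonneg (hinner_nonneg Cn ω fun t ht =>
        (hCn_range ω t ht).1)]
      exact hinner_le Cn ω (hCn_range ω)
    -- J comparison
    have hJcomp : J μ σ q Λ x P W C ≤ J μ σ q Λ x P W Cn + mh * (1 / q) := by
      have h1 := integral_mono_of_nonneg (μ := P)
        (ae_of_all _ fun ω => hinner_nonneg C ω fun t ht => (hCrange ω t ht).1)
        (hinnern_int.add (integrable_const (mh * (1 / q))))
        (ae_of_all _ hchain)
      simp only [Pi.add_apply] at h1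
      rw [integral_add hinnern_int (integrable_const (mh * (1 / q))), integral_const,
        probReal_univ, one_smul] at h1
      exact h1
    have hle2 : J μ σ q Λ x P W Cn ≤
        V μ σ q Λ P F W (Sn n : Set ℝ) x (ctilde (Sn n) c) :=
      le_csSup (hbdd _ (hSn_sub n) _) ⟨Cn, hCnAdm, rfl⟩
    linarith
  have hhard : V μ σ q Λ P F W (Icc 0 cbar) x c ≤ Vbar x c := by
    refine csSup_le (hne (Icc 0 cbar) (mem_Icc.mpr ⟨le_rfl, hcbar.le⟩) c hc.1) fun r hr => ?_
    obtain ⟨C, hC, rfl⟩ := hr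
    have hlim : Tendsto (fun n => V μ σ q Λ P F W (Sn n : Set ℝ) x (ctilde (Sn n) c) +
        meshSize (Sn n) * (1 / q)) atTop (𝓝 (Vbar x c + 0 * (1 / q))) :=
      (hVbar x c hx hc).add (hmesh.mul_const _)
    rw [zero_mul, add_zero] at hlim
    exact ge_of_tendsto hlim (Filter.Eventually.of_forall fun n => hkey n C hC)
  exact le_antisymm hVbar_le hhard

end CarbonAbatement
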